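/- Let x ∈ C[0,1] be Hölder continuous, θ_{m,k} its Faber–Schauder coefficients, and define z^{(n,k)}_i := 2^{3n/2} Σ_{m=n}^{n+k} 2^{−3m/2} Σ_{j=0}^{2^{m−n}−1} θ_{m, j + 2^{m−n}(i−1)} for 1 ≤ i ≤ 2^n. Then z^{(n,k)}_i = Σ_{j=0}^{2^{n+k+1}} ξ^{(n,k,i)}_j x(j/2^{n+k+1}), where ξ^{(n,k,i)}_j = 0 if j ≤ 2^{k+1}(i−1) − 1 or j ≥ 2^{k+1} i + 1; ξ^{(n,k,i)}_j = 2^{n/2}(2^{−k} − 2) if j = 2^{k+1}(i−1) or j = 2^{k+1} i; and ξ^{(n,k,i)}_j = 2^{1−k+n/2} for 2^{k+1}(i−1) + 1 ≤ j ≤ 2^{k+1} i − 1. -/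

import Mathlib

/-! Each Faber–Schauder coefficient is a second difference of `x` on a dyadic grid. Summed over
the dyadic interval `[c/2^n, (c+1)/2^n]`, the coefficients of level `n + t` give
`2 S (t+1) - 4 S t + x(c/2^n) + x((c+1)/2^n)`, where `S t` is the sum of `x` over the points of
mesh `2^-(n+t)` in that interval: the midpoints are the fine points minus the coarse ones. With the
weights `2^-t` of `z^{(n,k)}` the sums `S t` telescope, leaving only `S (k+1)` and the two endpoint
values, which is the claimed formula for `ξ`. -/

open Finset

noncomputable def theta (x : ℝ → ℝ) (m j : ℕ) : ℝ :=
  2 ^ ((m : ℝ) / 2) *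
    (2 * x ((2 * j + 1) / 2 ^ (m + 1)) - x (j / 2 ^ m) - x ((j + 1) / 2 ^ m))

/-- Truncated version `z^{(n,k)}_i` of the vector `z_n`. -/
noncomputable def znk (x : ℝ → ℝ) (n k i : ℕ) : ℝ :=
  2 ^ ((3 * (n : ℝ)) / 2) *
    ∑ m ∈ Finset.Icc n (n + k),
      2 ^ (-(3 * (m : ℝ)) / 2) *
        ∑ j ∈ range (2 ^ (m - n)), theta x m (j + 2 ^ (m - n) * (i - 1))

/-- The coefficients `ξ^{(n,k,i)}_j`. -/
noncomputable def xi (n k i j : ℕ) : ℝ :=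
  if j < 2 ^ (k + 1) * (i - 1) ∨ 2 ^ (k + 1) * i < j then 0
  else if j = 2 ^ (k + 1) * (i - 1) ∨ j = 2 ^ (k + 1) * i then
    2 ^ ((n : ℝ) / 2) * (2 ^ (-(k : ℝ)) - 2)
  else 2 ^ (1 - (k : ℝ) + (n : ℝ) / 2)

theorem Finset.sum_range_second_diff {R : Type*} [CommRing R] (f : ℕ → R) (a N : ℕ) :
    ∑ j ∈ range N, (2 * f (a + 2 * j + 1) - f (a + 2 * j) - f (a + 2 * j + 2)) =
      2 * ∑ p ∈ range (2 * N + 1), f (a + p) - 4 * ∑ j ∈ range (N + 1), f (a + 2 * j) +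
        (f a + f (a + 2 * N)) := by
  induction N with
  | zero =>
    simp only [mul_zero, add_zero, range_zero, sum_empty, zero_add, range_one, sum_singleton]
    ring
  | succ N ih =>
    rw [sum_range_succ, ih, show 2 * (N + 1) + 1 = 2 * N + 1 + 1 + 1 by ring,
      sum_range_succ _ (2 * N + 1 + 1), sum_range_succ _ (2 * N + 1), sum_range_succ _ (N + 1)]
    simp only [mul_add, mul_one, ← add_assoc]
    ring

theorem Finset.sum_range_geom_telescope {F : Type*} [Field F] [CharZero F] (S : ℕ → F) (E : F)
    (K : ℕ) :
    ∑ t ∈ range K, (2⁻¹ : F) ^ t * (2 * S (t + 1) - 4 * S t + E) =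
      4 * (2⁻¹ : F) ^ K * S K - 4 * S 0 + (2 - 2 * (2⁻¹ : F) ^ K) * E := by
  induction K with
  | zero => simp
  | succ K ih => rw [sum_range_succ, ih, pow_succ]; ring

theorem Finset.sum_range_ite_endpoints {R : Type*} [CommRing R] (g : ℕ → R) (A B : R) {L : ℕ}
    (hL : 0 < L) :
    ∑ p ∈ range (L + 1), (if p = 0 ∨ p = L then A else B) * g p =
      B * ∑ p ∈ range (L + 1), g p + (A - B) * (g 0 + g L) := by
  obtain ⟨L, rfl⟩ : ∃ L', L = L' + 1 := ⟨L - 1, by omega⟩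
  have hinterior : ∀ p ∈ range L, (if p + 1 = 0 ∨ p + 1 = L + 1 then A else B) * g (p + 1)
      = B * g (p + 1) := fun p hp => by
    rw [if_neg (by rw [mem_range] at hp; omega)]
  rw [sum_range_succ, sum_range_succ', sum_congr rfl hinterior, sum_range_succ, sum_range_succ',
    ← mul_sum, if_pos (Or.inl rfl), if_pos (Or.inr rfl)]
  ring

noncomputable def dyadicSample (x : ℝ → ℝ) (M p : ℕ) : ℝ := x (p / 2 ^ M)

theorem dyadicSample_two_mul (x : ℝ → ℝ) (M p : ℕ) :
    dyadicSample x (M + 1) (2 * p) = dyadicSample x M p := by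
  unfold dyadicSample
  congr 1
  push_cast
  rw [pow_succ]
  field_simp

theorem dyadicSample_pow_mul (x : ℝ → ℝ) (M s p : ℕ) :
    dyadicSample x (M + s) (2 ^ s * p) = dyadicSample x M p := by
  induction s with
  | zero => simp
  | succ s ih => rw [← add_assoc, pow_succ', mul_assoc, dyadicSample_two_mul, ih]

theorem theta_eq_dyadicSample (x : ℝ → ℝ) (m j : ℕ) :
    theta x m j = 2 ^ ((m : ℝ) / 2) * (2 * dyadicSample x (m + 1) (2 * j + 1)
      - dyadicSample x (m + 1) (2 * j) - dyadicSample x (m + 1) (2 * j + 2)) := by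
  rw [theta, dyadicSample_two_mul, show 2 * j + 2 = 2 * (j + 1) by ring, dyadicSample_two_mul]
  unfold dyadicSample
  congr 3 <;> push_cast <;> ring

/-- `S t` above, for the interval with left end `c / 2^n`. -/
noncomputable def blockSum (x : ℝ → ℝ) (n c t : ℕ) : ℝ :=
  ∑ p ∈ range (2 ^ t + 1), dyadicSample x (n + t) (2 ^ t * c + p)

theorem blockSum_zero (x : ℝ → ℝ) (n c : ℕ) :
    blockSum x n c 0 = dyadicSample x n c + dyadicSample x n (c + 1) := by
  simp [blockSum, sum_range_succ]

theorem sum_theta_block (x : ℝ → ℝ) (n c t : ℕ) :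
    ∑ j ∈ range (2 ^ t), theta x (n + t) (j + 2 ^ t * c) =
      2 ^ (((n + t : ℕ) : ℝ) / 2) * (2 * blockSum x n c (t + 1) - 4 * blockSum x n c t +
        (dyadicSample x n c + dyadicSample x n (c + 1))) := by
  set f := dyadicSample x (n + (t + 1))
  have hsplit : ∀ j ∈ range (2 ^ t), theta x (n + t) (j + 2 ^ t * c) =
      2 ^ (((n + t : ℕ) : ℝ) / 2) * (2 * f (2 ^ (t + 1) * c + 2 * j + 1)
        - f (2 ^ (t + 1) * c + 2 * j) - f (2 ^ (t + 1) * c + 2 * j + 2)) := fun j _ => by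
    rw [theta_eq_dyadicSample, show 2 * (j + 2 ^ t * c) = 2 ^ (t + 1) * c + 2 * j by ring]
    rfl
  have hfine : ∑ p ∈ range (2 * 2 ^ t + 1), f (2 ^ (t + 1) * c + p) = blockSum x n c (t + 1) := by
    rw [blockSum, pow_succ']
  have hcoarse : ∑ j ∈ range (2 ^ t + 1), f (2 ^ (t + 1) * c + 2 * j) = blockSum x n c t := by
    refine sum_congr rfl fun j _ => ?_
    rw [pow_succ', mul_assoc, ← mul_add]
    exact dyadicSample_two_mul x (n + t) _
  have hleft : f (2 ^ (t + 1) * c) = dyadicSample x n c := dyadicSample_pow_mul x n (t + 1) c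
  have hright : f (2 ^ (t + 1) * c + 2 * 2 ^ t) = dyadicSample x n (c + 1) := by
    rw [← pow_succ', ← mul_add_one]
    exact dyadicSample_pow_mul x n (t + 1) (c + 1)
  rw [sum_congr rfl hsplit, ← mul_sum, sum_range_second_diff, hfine, hcoarse, hleft, hright]

theorem znk_eq_sum_blockSum (x : ℝ → ℝ) (n k c : ℕ) :
    znk x n k (c + 1) = 2 ^ ((n : ℝ) / 2) * ∑ t ∈ range (k + 1), (2⁻¹ : ℝ) ^ t *
      (2 * blockSum x n c (t + 1) - 4 * blockSum x n c t +
        (dyadicSample x n c + dyadicSample x n (c + 1))) := by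
  rw [znk, ← Ico_add_one_right_eq_Icc, sum_Ico_eq_sum_range, mul_sum, mul_sum,
    show n + k + 1 - n = k + 1 by omega]
  refine sum_congr rfl fun t _ => ?_
  rw [show n + t - n = t by omega, Nat.add_sub_cancel, sum_theta_block, ← mul_assoc, ← mul_assoc,
    ← mul_assoc]
  congr 1
  rw [inv_pow, ← Real.rpow_natCast, ← Real.rpow_neg zero_le_two, ← Real.rpow_add two_pos,
    ← Real.rpow_add two_pos, ← Real.rpow_add two_pos]
  congr 1
  push_cast
  ring

theorem xi_eq_zero_of_lt_or_lt (n k c j : ℕ)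
    (hj : j < 2 ^ (k + 1) * c ∨ 2 ^ (k + 1) * c + 2 ^ (k + 1) < j) : xi n k (c + 1) j = 0 := by
  rw [xi, if_pos (by rwa [mul_add_one, Nat.add_sub_cancel])]

theorem xi_block_add (n k c p : ℕ) (hp : p ≤ 2 ^ (k + 1)) :
    xi n k (c + 1) (2 ^ (k + 1) * c + p) = if p = 0 ∨ p = 2 ^ (k + 1) then
      2 ^ ((n : ℝ) / 2) * (2 ^ (-(k : ℝ)) - 2) else 2 ^ (1 - (k : ℝ) + (n : ℝ) / 2) := by
  rw [xi, mul_add_one, Nat.add_sub_cancel, if_neg (by omega)]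
  simp only [add_eq_left, add_right_inj]

theorem sum_xi_mul_eq (x : ℝ → ℝ) (n k c : ℕ) (hc : c + 1 ≤ 2 ^ n) :
    ∑ j ∈ range (2 ^ (n + k + 1) + 1), xi n k (c + 1) j * x (j / 2 ^ (n + k + 1)) =
      2 ^ (1 - (k : ℝ) + (n : ℝ) / 2) * blockSum x n c (k + 1) +
        (2 ^ ((n : ℝ) / 2) * (2 ^ (-(k : ℝ)) - 2) - 2 ^ (1 - (k : ℝ) + (n : ℝ) / 2)) *
          (dyadicSample x n c + dyadicSample x n (c + 1)) := by
  have hLN : 2 ^ (k + 1) * c + 2 ^ (k + 1) ≤ 2 ^ (n + k + 1) := by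
    rw [← mul_add_one, show n + k + 1 = k + 1 + n by ring, pow_add 2 (k + 1) n]
    exact Nat.mul_le_mul_left _ hc
  have hwindow : Icc (2 ^ (k + 1) * c) (2 ^ (k + 1) * c + 2 ^ (k + 1)) ⊆
      range (2 ^ (n + k + 1) + 1) := fun j hj => by
    simp only [mem_Icc, mem_range] at hj ⊢
    omega
  have houtside : ∀ j ∈ range (2 ^ (n + k + 1) + 1),
      j ∉ Icc (2 ^ (k + 1) * c) (2 ^ (k + 1) * c + 2 ^ (k + 1)) →
      xi n k (c + 1) j * x (j / 2 ^ (n + k + 1)) = 0 := fun j _ hj => by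
    rw [xi_eq_zero_of_lt_or_lt n k c j (by simp only [mem_Icc] at hj; omega), zero_mul]
  rw [← sum_subset hwindow houtside, ← Ico_add_one_right_eq_Icc, sum_Ico_eq_sum_range,
    show 2 ^ (k + 1) * c + 2 ^ (k + 1) + 1 - 2 ^ (k + 1) * c = 2 ^ (k + 1) + 1 by
      rw [add_assoc, Nat.add_sub_cancel_left]]
  have hblock : ∀ p ∈ range (2 ^ (k + 1) + 1),
      xi n k (c + 1) (2 ^ (k + 1) * c + p) * x (↑(2 ^ (k + 1) * c + p) / 2 ^ (n + k + 1)) =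
        (if p = 0 ∨ p = 2 ^ (k + 1) then 2 ^ ((n : ℝ) / 2) * (2 ^ (-(k : ℝ)) - 2)
          else 2 ^ (1 - (k : ℝ) + (n : ℝ) / 2)) *
          dyadicSample x (n + (k + 1)) (2 ^ (k + 1) * c + p) :=
    fun p hp => by rw [xi_block_add n k c p (Nat.lt_succ_iff.mp (mem_range.mp hp))]; rfl
  rw [sum_congr rfl hblock, sum_range_ite_endpoints _ _ _ (by positivity), add_zero,
    dyadicSample_pow_mul, ← mul_add_one, dyadicSample_pow_mul]
  rfl

theorem stmt8 (x : ℝ → ℝ) (n k i : ℕ) (hi1 : 1 ≤ i) (hi2 : i ≤ 2 ^ n) :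
    znk x n k i =
      ∑ j ∈ range (2 ^ (n + k + 1) + 1), xi n k i j * x (j / 2 ^ (n + k + 1)) := by
  obtain ⟨c, rfl⟩ : ∃ c, i = c + 1 := ⟨i - 1, by omega⟩
  have hneg : (2 : ℝ) ^ (-(k : ℝ)) = (2⁻¹ : ℝ) ^ k := by
    rw [Real.rpow_neg zero_le_two, Real.rpow_natCast, inv_pow]
  have hcoeff : (2 : ℝ) ^ (1 - (k : ℝ) + (n : ℝ) / 2) = 2 * (2⁻¹ : ℝ) ^ k * 2 ^ ((n : ℝ) / 2) := by
    rw [sub_eq_add_neg, Real.rpow_add two_pos, Real.rpow_add two_pos, Real.rpow_one, hneg]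
  rw [znk_eq_sum_blockSum, sum_range_geom_telescope, blockSum_zero, sum_xi_mul_eq x n k c hi2,
    hcoeff, hneg, pow_succ]
  ring
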